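/- Let α > β ≥ 3 be integers. In ℚ³ set v₀ = (−1, α, β), v₁ = (1, 0, 0), e₂ = (0, 0, 1), and let m = (1, (2−β)/α, 1), so that ⟨m, v₀⟩ = ⟨m, v₁⟩ = ⟨m, e₂⟩ = 1. Then the lattice point w = (0, 1, 1) is a strictly positive rational combination of v₀, v₁, e₂, and ⟨m, w⟩ − 1 = (2−β)/α < 0. -/

import Mathlib

open Matrix

section
variable {K : Type*} [Field K]

lemma dotProduct_vec3_cartier_ray {a b : K} (ha : a ≠ 0) :
    ![1, (2 - b) / a, 1] ⬝ᵥ ![-1, a, b] = 1 := by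
  rw [vec3_dotProduct']
  field_simp
  ring

lemma vec3_zero_one_one_eq_combination {a b : K} (ha : a ≠ 0) :
    ![0, 1, 1] = a⁻¹ • ![-1, a, b] + a⁻¹ • ![1, 0, 0] + (1 - b / a) • ![0, 0, 1] := by
  simp only [smul_vec3, vec3_add, smul_eq_mul, mul_neg, mul_one, mul_zero, add_zero,
    inv_mul_cancel₀ ha, neg_add_cancel]
  congr 3
  field_simp
  ring

end

lemma dotProduct_vec3_zero_one_one_sub_one {R : Type*} [CommRing R] (t : R) :
    ![1, t, 1] ⬝ᵥ ![0, 1, 1] - 1 = t := by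
  rw [vec3_dotProduct']
  ring

/-- Discrepancy computation in Proposition 2.2: for `α > β ≥ 3`,
`m = (1, (2−β)/α, 1)` takes value 1 on `v₀, v₁, e₂`, the lattice point
`w = (0,1,1)` is a strictly positive rational combination of `v₀, v₁, e₂`,
and the discrepancy `⟨m, w⟩ − 1 = (2−β)/α` is negative. -/
theorem stmt10 (α β : ℤ) (hβ : 3 ≤ β) (hαβ : β < α) :
    let v₀ : Fin 3 → ℚ := ![-1, (α : ℚ), (β : ℚ)]
    let v₁ : Fin 3 → ℚ := ![1, 0, 0]
    let e₂ : Fin 3 → ℚ := ![0, 0, 1]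
    let m : Fin 3 → ℚ := ![1, (2 - (β : ℚ)) / (α : ℚ), 1]
    let w : Fin 3 → ℚ := ![0, 1, 1]
    (m ⬝ᵥ v₀ = 1 ∧ m ⬝ᵥ v₁ = 1 ∧ m ⬝ᵥ e₂ = 1) ∧
    (∃ a b c : ℚ, 0 < a ∧ 0 < b ∧ 0 < c ∧ w = a • v₀ + b • v₁ + c • e₂) ∧
    m ⬝ᵥ w - 1 = (2 - (β : ℚ)) / (α : ℚ) ∧ (2 - (β : ℚ)) / (α : ℚ) < 0 := by
  intro v₀ v₁ e₂ m w
  have hβ : (3 : ℚ) ≤ β := by exact_mod_cast hβ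
  have hβα : (β : ℚ) < α := by exact_mod_cast hαβ
  have hα : (0 : ℚ) < α := by linarith
  refine ⟨⟨dotProduct_vec3_cartier_ray hα.ne', ?_, ?_⟩,
    ⟨_, _, _, inv_pos.2 hα, inv_pos.2 hα, sub_pos.2 ((div_lt_one hα).2 hβα),
      vec3_zero_one_one_eq_combination hα.ne'⟩,
    dotProduct_vec3_zero_one_one_sub_one _, div_neg_of_neg_of_pos (by linarith) hα⟩
  · simp [m, v₁]
  · simp [m, e₂]
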